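/- arXiv:2012.12840 — 3 statements merged into one kernel-verified Lean document; each statement's English description precedes it below -/
import Mathlib

section
/- Let h₀ > 0 and define w : ℝ² → ℝ by w(x) = −2·ln(1 + π·h₀·|x|²). Then lim_{R → ∞} [ (1/(16π))·∫_{B_R(0)} ‖∇w(x)‖² dx − ln(π·h₀·R²) ] = −1. -/
/-!
With `a = π h₀`, the bubble is radial with `|∇w| = 4 a r / (1 + a r²)`, so in polar coordinates
`∫_{B_R} |∇w|² = 2π ∫₀^R r |∇w|² dr`, and the integrand `8 · 2a²r³ / (1 + ar²)²` has the explicit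
antiderivative `8 (log (1 + ar²) + (1 + ar²)⁻¹)`. Hence the quantity in question equals
`log (1 + (aR²)⁻¹) + (1 + aR²)⁻¹ - 1`, which tends to `-1`.
-/

open MeasureTheory Filter

theorem hasGradientAt_neg_two_mul_log_one_add_mul_norm_sq {E : Type*} [NormedAddCommGroup E]
    [InnerProductSpace ℝ E] [CompleteSpace E] {a : ℝ} (ha : 0 ≤ a) (x : E) :
    HasGradientAt (fun y => -2 * Real.log (1 + a * ‖y‖ ^ 2))
      ((-4 * a / (1 + a * ‖x‖ ^ 2)) • x) x := by
  have hpos : 0 < 1 + a * ‖x‖ ^ 2 := by positivity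
  have hnorm_sq : HasFDerivAt (fun y : E => 1 + a * ‖y‖ ^ 2) (a • (2 : ℕ) • innerSL ℝ x) x :=
    (((hasFDerivAt_id x).norm_sq).const_mul a).const_add 1
  rw [hasGradientAt_iff_hasFDerivAt]
  refine ((hnorm_sq.log hpos.ne').const_mul (-2)).congr_fderiv ?_
  ext y
  simp only [smul_apply, coe_innerSL_apply, InnerProductSpace.toDual_apply_apply,
    real_inner_smul_left, nsmul_eq_mul, smul_eq_mul]
  field_simp
  ring

theorem norm_sq_gradient_neg_two_mul_log_one_add_mul_norm_sq {E : Type*} [NormedAddCommGroup E]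
    [InnerProductSpace ℝ E] [CompleteSpace E] {a : ℝ} (ha : 0 ≤ a) (x : E) :
    ‖gradient (fun y => -2 * Real.log (1 + a * ‖y‖ ^ 2)) x‖ ^ 2
      = (4 * a * ‖x‖ / (1 + a * ‖x‖ ^ 2)) ^ 2 := by
  have hpos : 0 < 1 + a * ‖x‖ ^ 2 := by positivity
  rw [(hasGradientAt_neg_two_mul_log_one_add_mul_norm_sq ha x).gradient, norm_smul, mul_pow,
    Real.norm_eq_abs, sq_abs]
  field_simp

theorem volume_real_ball_zero_one_euclideanSpace_fin_two :
    volume.real (Metric.ball (0 : EuclideanSpace ℝ (Fin 2)) 1) = Real.pi := by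
  rw [measureReal_def, EuclideanSpace.volume_ball]
  norm_num [Real.Gamma_two, Real.sq_sqrt Real.pi_pos.le, ENNReal.toReal_ofReal Real.pi_pos.le]

theorem setIntegral_ball_fun_norm_euclideanSpace_fin_two {F : Type*} [NormedAddCommGroup F]
    [NormedSpace ℝ F] (f : ℝ → F) {R : ℝ} (hR : 0 ≤ R) :
    ∫ x in Metric.ball (0 : EuclideanSpace ℝ (Fin 2)) R, f ‖x‖
      = (2 * Real.pi) • ∫ r in (0 : ℝ)..R, r • f r := by
  have hball : ∀ x : EuclideanSpace ℝ (Fin 2),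
      (Metric.ball 0 R).indicator (fun x => f ‖x‖) x = (Set.Iio R).indicator f ‖x‖ := by
    intro x
    by_cases h : ‖x‖ < R <;> simp [Set.indicator, h]
  have hradial : ∀ r : ℝ, r ^ (2 - 1) • (Set.Iio R).indicator f r
      = (Set.Iio R).indicator (fun r => r • f r) r := by
    intro r
    by_cases h : r < R <;> simp [Set.indicator, h]
  rw [← integral_indicator measurableSet_ball]
  simp only [hball]
  rw [integral_fun_norm_addHaar volume ((Set.Iio R).indicator f), finrank_euclideanSpace_fin,
    volume_real_ball_zero_one_euclideanSpace_fin_two]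
  simp only [hradial]
  rw [setIntegral_indicator measurableSet_Iio, Set.Ioi_inter_Iio,
    ← integral_Ioc_eq_integral_Ioo, ← intervalIntegral.integral_of_le hR, ← smul_assoc,
    nsmul_eq_mul, Nat.cast_ofNat]

theorem hasDerivAt_log_one_add_mul_sq_add_inv {a : ℝ} (ha : 0 ≤ a) (r : ℝ) :
    HasDerivAt (fun r => Real.log (1 + a * r ^ 2) + (1 + a * r ^ 2)⁻¹)
      (2 * a ^ 2 * r ^ 3 / (1 + a * r ^ 2) ^ 2) r := by
  have hpos : 0 < 1 + a * r ^ 2 := by positivity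
  have hq : HasDerivAt (fun r => 1 + a * r ^ 2) (a * (2 * r)) r := by
    simpa using ((hasDerivAt_pow 2 r).const_mul a).const_add 1
  refine ((hq.log hpos.ne').add (hq.inv hpos.ne')).congr_deriv ?_
  field_simp
  ring

theorem integral_norm_sq_gradient_neg_two_mul_log_one_add_mul_norm_sq {a : ℝ} (ha : 0 ≤ a)
    {R : ℝ} (hR : 0 ≤ R) :
    ∫ x in Metric.ball (0 : EuclideanSpace ℝ (Fin 2)) R,
        ‖gradient (fun y => -2 * Real.log (1 + a * ‖y‖ ^ 2)) x‖ ^ 2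
      = 16 * Real.pi * (Real.log (1 + a * R ^ 2) + (1 + a * R ^ 2)⁻¹ - 1) := by
  have hintegrand : ∀ r : ℝ, r * (4 * a * r / (1 + a * r ^ 2)) ^ 2
      = 8 * (2 * a ^ 2 * r ^ 3 / (1 + a * r ^ 2) ^ 2) := by
    intro r
    have hpos : 0 < 1 + a * r ^ 2 := by positivity
    field_simp
    ring
  have hcont : Continuous fun r : ℝ => 2 * a ^ 2 * r ^ 3 / (1 + a * r ^ 2) ^ 2 :=
    Continuous.div (by fun_prop) (by fun_prop) fun r => by positivity
  simp only [norm_sq_gradient_neg_two_mul_log_one_add_mul_norm_sq ha]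
  rw [setIntegral_ball_fun_norm_euclideanSpace_fin_two
    (fun r => (4 * a * r / (1 + a * r ^ 2)) ^ 2) hR]
  simp only [smul_eq_mul, hintegrand, intervalIntegral.integral_const_mul]
  rw [intervalIntegral.integral_eq_sub_of_hasDerivAt
    (fun r _ => hasDerivAt_log_one_add_mul_sq_add_inv ha r) (hcont.intervalIntegrable 0 R)]
  norm_num
  ring

theorem tendsto_log_one_add_add_inv_one_add_sub_log :
    Tendsto (fun t : ℝ => Real.log (1 + t) + (1 + t)⁻¹ - 1 - Real.log t) atTop (nhds (-1)) := by
  have hlog : Tendsto (fun t : ℝ => Real.log (1 + t⁻¹)) atTop (nhds 0) := by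
    have h : Tendsto (fun t : ℝ => 1 + t⁻¹) atTop (nhds 1) := by
      simpa using (tendsto_inv_atTop_zero (𝕜 := ℝ)).const_add 1
    simpa [Function.comp_def] using (Real.continuousAt_log one_ne_zero).tendsto.comp h
  have hinv : Tendsto (fun t : ℝ => (1 + t)⁻¹) atTop (nhds 0) :=
    (tendsto_atTop_add_const_left _ 1 tendsto_id).inv_tendsto_atTop
  refine ((hlog.add hinv).sub_const 1).congr' ?_ |>.trans (by norm_num)
  filter_upwards [eventually_gt_atTop 0] with t ht
  rw [show 1 + t⁻¹ = (1 + t) / t by field_simp; ring, Real.log_div (by positivity) ht.ne']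
  ring

theorem stmt_6 (h₀ : ℝ) (hh : 0 < h₀)
    (w : EuclideanSpace ℝ (Fin 2) → ℝ)
    (hw : ∀ x, w x = -2 * Real.log (1 + Real.pi * h₀ * ‖x‖ ^ 2)) :
    Tendsto (fun R : ℝ =>
        (1 / (16 * Real.pi)) *
          (∫ x in Metric.ball (0 : EuclideanSpace ℝ (Fin 2)) R, ‖gradient w x‖ ^ 2) -
        Real.log (Real.pi * h₀ * R ^ 2))
      atTop (nhds (-1)) := by
  obtain rfl : w = fun x => -2 * Real.log (1 + Real.pi * h₀ * ‖x‖ ^ 2) := funext hw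
  have ha : 0 < Real.pi * h₀ := mul_pos Real.pi_pos hh
  have hscale : Tendsto (fun R : ℝ => Real.pi * h₀ * R ^ 2) atTop atTop :=
    (tendsto_pow_atTop two_ne_zero).const_mul_atTop ha
  refine (tendsto_log_one_add_add_inv_one_add_sub_log.comp hscale).congr' ?_
  filter_upwards [eventually_ge_atTop 0] with R hR
  rw [integral_norm_sq_gradient_neg_two_mul_log_one_add_mul_norm_sq ha.le hR, one_div,
    inv_mul_cancel_left₀ (by positivity)]
  rfl
end

section
/- Let 0 < R₁ < R₂ and let u : ℝ² → ℝ be smooth on an open neighborhood of the closed annulus {x : R₁ ≤ |x| ≤ R₂}. Define the circular average g : (R₁, R₂) → ℝ by g(r) = (1/(2π))·∫_0^{2π} u(r·cos θ, r·sin θ) dθ. Then g is differentiable on (R₁, R₂) and 2π·∫_{R₁}^{R₂} r·(g′(r))² dr ≤ ∫_{{R₁ < |x| < R₂}} ‖∇u(x)‖² dx. -/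
open MeasureTheory

open Set Real intervalIntegral in
private noncomputable def vdir (θ : ℝ) : EuclideanSpace ℝ (Fin 2) :=
  (WithLp.equiv 2 (Fin 2 → ℝ)).symm ![Real.cos θ, Real.sin θ]

section Aux
open Set Real intervalIntegral

private lemma norm_vdir (θ : ℝ) : ‖vdir θ‖ = 1 := by
  have h : Real.cos θ ^ 2 + Real.sin θ ^ 2 = 1 := Real.cos_sq_add_sin_sq θ
  simp only [vdir, EuclideanSpace.norm_eq, Fin.sum_univ_two]
  rw [Real.sqrt_eq_one]
  simpa [Real.norm_eq_abs, sq_abs, ← sq] using h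

private lemma cont_vdir : Continuous vdir := by
  have h : Continuous fun θ : ℝ => ![Real.cos θ, Real.sin θ] := by
    refine continuous_pi fun i => ?_
    fin_cases i
    · simpa using Real.continuous_cos
    · simpa using Real.continuous_sin
  exact (PiLp.continuous_toLp (p := 2) (β := fun _ : Fin 2 => ℝ)).comp h

private lemma vdir_per (θ : ℝ) : vdir (θ + 2 * π) = vdir θ := by
  simp only [vdir, Real.cos_add_two_pi, Real.sin_add_two_pi]

private lemma cpt_eq (r θ : ℝ) :
    (WithLp.equiv 2 (Fin 2 → ℝ)).symm ![r * Real.cos θ, r * Real.sin θ] = r • vdir θ := by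
  simp only [vdir, WithLp.equiv_symm_apply, ← WithLp.toLp_smul]
  congr 1
  funext i
  fin_cases i <;> simp

private noncomputable def me2 : EuclideanSpace ℝ (Fin 2) ≃ᵐ ℝ × ℝ :=
  (MeasurableEquiv.toLp 2 (Fin 2 → ℝ)).symm.trans MeasurableEquiv.finTwoArrow

private lemma me2_symm_apply (p : ℝ × ℝ) :
    me2.symm p = (WithLp.equiv 2 (Fin 2 → ℝ)).symm ![p.1, p.2] := rfl

private lemma me2_preserving : MeasurePreserving me2 :=
  (EuclideanSpace.volume_preserving_symm_measurableEquiv_toLp (Fin 2)).trans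
    (volume_preserving_finTwoArrow ℝ)

private lemma norm_symm_pair (a b : ℝ) :
    ‖(WithLp.equiv 2 (Fin 2 → ℝ)).symm ![a, b]‖ = Real.sqrt (a ^ 2 + b ^ 2) := by
  simp [EuclideanSpace.norm_eq, Fin.sum_univ_two, Real.norm_eq_abs, sq_abs]

private lemma continuous_polarCoord_symm' : Continuous (↑polarCoord.symm : ℝ × ℝ → ℝ × ℝ) := by
  show Continuous fun p : ℝ × ℝ => (p.1 * Real.cos p.2, p.1 * Real.sin p.2)
  fun_prop

private lemma polar_setIntegral (R₁ R₂ : ℝ) (hR₁ : 0 < R₁) (G : EuclideanSpace ℝ (Fin 2) → ℝ) :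
    ∫ x in {x : EuclideanSpace ℝ (Fin 2) | R₁ < ‖x‖ ∧ ‖x‖ < R₂}, G x
      = ∫ p in Ioo R₁ R₂ ×ˢ Ioo (-π) π,
          p.1 * G ((WithLp.equiv 2 (Fin 2 → ℝ)).symm ![p.1 * Real.cos p.2, p.1 * Real.sin p.2]) := by
  set A : Set (EuclideanSpace ℝ (Fin 2)) := {x | R₁ < ‖x‖ ∧ ‖x‖ < R₂} with hA
  have hAeq : A = (fun x : EuclideanSpace ℝ (Fin 2) => ‖x‖) ⁻¹' Ioo R₁ R₂ := rfl
  have hAmeas : MeasurableSet A := by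
    rw [hAeq]; exact measurableSet_Ioo.preimage continuous_norm.measurable
  set A' : Set (ℝ × ℝ) := me2.symm ⁻¹' A with hA'
  have hA'meas : MeasurableSet A' := me2.symm.measurable hAmeas
  have h1 : ∫ x in A, G x = ∫ y in A', G (me2.symm y) := by
    rw [← Set.image_preimage_eq A me2.symm.surjective]
    exact (MeasurePreserving.symm me2 me2_preserving).setIntegral_image_emb
      me2.symm.measurableEmbedding G A'
  have h2 : ∫ y in A', G (me2.symm y) = ∫ y, A'.indicator (fun y => G (me2.symm y)) y :=
    (MeasureTheory.integral_indicator hA'meas).symm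
  have h3 : (∫ p in polarCoord.target,
        p.1 • A'.indicator (fun y => G (me2.symm y)) (polarCoord.symm p))
      = ∫ y, A'.indicator (fun y => G (me2.symm y)) y :=
    integral_comp_polarCoord_symm _
  have h4 : (fun p : ℝ × ℝ => p.1 • A'.indicator (fun y => G (me2.symm y)) (polarCoord.symm p))
      = (↑polarCoord.symm ⁻¹' A').indicator (fun p => p.1 * G (me2.symm (polarCoord.symm p))) := by
    funext p
    by_cases h : (polarCoord.symm p : ℝ × ℝ) ∈ A'
    · rw [Set.indicator_of_mem h,
        Set.indicator_of_mem (show p ∈ (↑polarCoord.symm ⁻¹' A') from h)]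
      rfl
    · rw [Set.indicator_of_notMem h,
        Set.indicator_of_notMem (show p ∉ (↑polarCoord.symm ⁻¹' A') from h), smul_zero]
  have hSmeas : MeasurableSet ((↑polarCoord.symm : ℝ × ℝ → ℝ × ℝ) ⁻¹' A') :=
    hA'meas.preimage continuous_polarCoord_symm'.measurable
  have h5 : (∫ p in polarCoord.target,
        p.1 • A'.indicator (fun y => G (me2.symm y)) (polarCoord.symm p))
      = ∫ p in polarCoord.target ∩ (↑polarCoord.symm ⁻¹' A'),
          p.1 * G (me2.symm (polarCoord.symm p)) := by
    rw [h4, setIntegral_indicator hSmeas]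
  have hset : polarCoord.target ∩ (↑polarCoord.symm ⁻¹' A') = Ioo R₁ R₂ ×ˢ Ioo (-π) π := by
    ext ⟨r, θ⟩
    have hnorm : ‖me2.symm (polarCoord.symm (r, θ))‖ = Real.sqrt (r ^ 2) := by
      rw [me2_symm_apply]
      show ‖(WithLp.equiv 2 (Fin 2 → ℝ)).symm ![r * Real.cos θ, r * Real.sin θ]‖ = _
      rw [norm_symm_pair]
      congr 1
      rw [mul_pow, mul_pow, ← mul_add, Real.cos_sq_add_sin_sq, mul_one]
    constructor
    · rintro ⟨⟨hr, hθ⟩, hp⟩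
      simp only [mem_Ioi] at hr
      have habs : ‖me2.symm (polarCoord.symm (r, θ))‖ = r := by
        rw [hnorm, Real.sqrt_sq hr.le]
      obtain ⟨h₁, h₂⟩ : R₁ < ‖me2.symm (polarCoord.symm (r, θ))‖ ∧
          ‖me2.symm (polarCoord.symm (r, θ))‖ < R₂ := hp
      exact ⟨⟨by rwa [habs] at h₁, by rwa [habs] at h₂⟩, hθ⟩
    · rintro ⟨⟨h₁, h₂⟩, hθ⟩
      have hr : 0 < r := hR₁.trans h₁
      have habs : ‖me2.symm (polarCoord.symm (r, θ))‖ = r := by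
        rw [hnorm, Real.sqrt_sq hr.le]
      refine ⟨⟨mem_Ioi.2 hr, hθ⟩, ?_⟩
      show R₁ < ‖me2.symm (polarCoord.symm (r, θ))‖ ∧ ‖me2.symm (polarCoord.symm (r, θ))‖ < R₂
      rw [habs]; exact ⟨h₁, h₂⟩
  rw [h1, h2, ← h3, h5, hset]
  rfl

private lemma cs_aux {f : ℝ → ℝ} {T : ℝ} (hT : 0 < T) (hf : IntervalIntegrable f volume 0 T)
    (hf2 : IntervalIntegrable (fun θ => f θ ^ 2) volume 0 T) :
    (∫ θ in (0:ℝ)..T, f θ) ^ 2 ≤ T * ∫ θ in (0:ℝ)..T, f θ ^ 2 := by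
  set I := ∫ θ in (0:ℝ)..T, f θ with hI
  set J := ∫ θ in (0:ℝ)..T, f θ ^ 2 with hJ
  set m := I / T with hm
  have h0 : 0 ≤ ∫ θ in (0:ℝ)..T, (f θ - m) ^ 2 :=
    intervalIntegral.integral_nonneg hT.le fun x _ => sq_nonneg _
  have hexp : ∫ θ in (0:ℝ)..T, (f θ - m) ^ 2 = J - 2 * m * I + m ^ 2 * T := by
    have h1 : ∫ θ in (0:ℝ)..T, (f θ - m) ^ 2
        = ∫ θ in (0:ℝ)..T, (f θ ^ 2 - 2 * m * f θ + m ^ 2) :=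
      intervalIntegral.integral_congr fun x _ => by ring
    rw [h1, intervalIntegral.integral_add ((hf2.sub ((hf.const_mul (2 * m)))))
      intervalIntegrable_const,
      intervalIntegral.integral_sub hf2 (hf.const_mul (2 * m)),
      intervalIntegral.integral_const_mul, intervalIntegral.integral_const]
    simp [smul_eq_mul]
    ring
  rw [hexp] at h0
  have hmT : m * T = I := by rw [hm]; field_simp
  have h2 : I ^ 2 / T ≤ J := by
    have : m ^ 2 * T = I ^ 2 / T := by rw [hm]; field_simp
    have h3 : m * I = I ^ 2 / T := by rw [hm, div_mul_eq_mul_div, ← sq]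
    linarith [h0, this, h3]
  rw [div_le_iff₀ hT] at h2
  linarith [h2]

private lemma smul_vdir_mem_K {R₁ R₂ : ℝ} (θ : ℝ) {s : ℝ} (h0 : 0 ≤ s) (h1 : R₁ ≤ s)
    (h2 : s ≤ R₂) :
    s • vdir θ ∈ {x : EuclideanSpace ℝ (Fin 2) | R₁ ≤ ‖x‖ ∧ ‖x‖ ≤ R₂} := by
  have : ‖s • vdir θ‖ = s := by
    rw [norm_smul, norm_vdir, mul_one, Real.norm_eq_abs, abs_of_nonneg h0]
  exact ⟨by rw [this]; exact h1, by rw [this]; exact h2⟩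

private lemma compact_K {R₁ R₂ : ℝ} :
    IsCompact {x : EuclideanSpace ℝ (Fin 2) | R₁ ≤ ‖x‖ ∧ ‖x‖ ≤ R₂} := by
  have hcl : IsClosed {x : EuclideanSpace ℝ (Fin 2) | R₁ ≤ ‖x‖ ∧ ‖x‖ ≤ R₂} := by
    have : {x : EuclideanSpace ℝ (Fin 2) | R₁ ≤ ‖x‖ ∧ ‖x‖ ≤ R₂}
        = (fun x : EuclideanSpace ℝ (Fin 2) => ‖x‖) ⁻¹' Icc R₁ R₂ := rfl
    rw [this]
    exact isClosed_Icc.preimage continuous_norm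
  refine (isCompact_closedBall (0 : EuclideanSpace ℝ (Fin 2)) R₂).of_isClosed_subset hcl ?_
  intro x hx
  exact mem_closedBall_zero_iff.2 hx.2

private lemma key_deriv {R₁ R₂ : ℝ} {u : EuclideanSpace ℝ (Fin 2) → ℝ}
    {U : Set (EuclideanSpace ℝ (Fin 2))}
    (hR₁ : 0 < R₁) (hU : IsOpen U)
    (hUsub : {x : EuclideanSpace ℝ (Fin 2) | R₁ ≤ ‖x‖ ∧ ‖x‖ ≤ R₂} ⊆ U)
    (hu : ContDiffOn ℝ (⊤ : ℕ∞) u U) {r : ℝ} (hr : r ∈ Ioo R₁ R₂) :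
    IntervalIntegrable (fun θ => fderiv ℝ u (r • vdir θ) (vdir θ)) volume 0 (2 * π) ∧
      HasDerivAt (fun s => ∫ θ in (0:ℝ)..(2 * π), u (s • vdir θ))
        (∫ θ in (0:ℝ)..(2 * π), fderiv ℝ u (r • vdir θ) (vdir θ)) r := by
  set K := {x : EuclideanSpace ℝ (Fin 2) | R₁ ≤ ‖x‖ ∧ ‖x‖ ≤ R₂} with hK
  have hKU : K ⊆ U := hUsub
  have hmemK : ∀ {s : ℝ}, s ∈ Icc R₁ R₂ → ∀ θ, s • vdir θ ∈ K := fun {s} hs θ =>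
    smul_vdir_mem_K θ (hR₁.le.trans hs.1) hs.1 hs.2
  have hfd : ContinuousOn (fderiv ℝ u) U := hu.continuousOn_fderiv_of_isOpen hU (by simp)
  obtain ⟨M, hM⟩ := compact_K.exists_bound_of_continuousOn (hfd.mono hKU)
  set ε := min (r - R₁) (R₂ - r) with hε
  have ε_pos : 0 < ε := lt_min (by linarith [hr.1]) (by linarith [hr.2])
  have hball : Metric.ball r ε ⊆ Icc R₁ R₂ := by
    intro x hx
    rw [Metric.mem_ball, Real.dist_eq, abs_sub_lt_iff] at hx
    constructor
    · nlinarith [min_le_left (r - R₁) (R₂ - r), hx.2]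
    · nlinarith [min_le_right (r - R₁) (R₂ - r), hx.1]
  have hcont_s : ∀ s ∈ Icc R₁ R₂, Continuous fun θ => u (s • vdir θ) := by
    intro s hs
    exact hu.continuousOn.comp_continuous ((continuous_const (y := s)).smul cont_vdir)
      (fun θ => hKU (hmemK hs θ))
  refine intervalIntegral.hasDerivAt_integral_of_dominated_loc_of_deriv_le
    (F := fun s θ => u (s • vdir θ))
    (F' := fun s θ => fderiv ℝ u (s • vdir θ) (vdir θ)) (bound := fun _ => M) (Metric.ball_mem_nhds r ε_pos) ?_ ?_ ?_ ?_ ?_ ?_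
  · filter_upwards [Icc_mem_nhds hr.1 hr.2] with s hs
    exact (hcont_s s hs).aestronglyMeasurable
  · exact (hcont_s r (Ioo_subset_Icc_self hr)).intervalIntegrable _ _
  · have : Continuous fun θ => fderiv ℝ u (r • vdir θ) (vdir θ) := by
      refine Continuous.clm_apply ?_ cont_vdir
      exact hfd.comp_continuous ((continuous_const (y := r)).smul cont_vdir)
        (fun θ => hKU (hmemK (Ioo_subset_Icc_self hr) θ))
    exact this.aestronglyMeasurable
  · refine Filter.Eventually.of_forall fun θ _ x hx => ?_
    have hxK : x • vdir θ ∈ K := hmemK (hball hx) θ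
    calc ‖fderiv ℝ u (x • vdir θ) (vdir θ)‖
        ≤ ‖fderiv ℝ u (x • vdir θ)‖ * ‖vdir θ‖ := ContinuousLinearMap.le_opNorm _ _
      _ = ‖fderiv ℝ u (x • vdir θ)‖ := by rw [norm_vdir, mul_one]
      _ ≤ M := hM _ hxK
  · exact intervalIntegrable_const
  · refine Filter.Eventually.of_forall fun θ _ x hx => ?_
    have hxU : x • vdir θ ∈ U := hKU (hmemK (hball hx) θ)
    have hdu : DifferentiableAt ℝ u (x • vdir θ) :=
      ((hu.differentiableOn (by simp)) _ hxU).differentiableAt (hU.mem_nhds hxU)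
    have hs : HasDerivAt (fun y : ℝ => y • vdir θ) (vdir θ) x := by
      simpa using (hasDerivAt_id x).smul_const (vdir θ)
    exact hdu.hasFDerivAt.comp_hasDerivAt x hs

end Aux

open Set Real intervalIntegral in
theorem stmt_8 (R₁ R₂ : ℝ) (hR₁ : 0 < R₁) (hR : R₁ < R₂)
    (u : EuclideanSpace ℝ (Fin 2) → ℝ)
    (U : Set (EuclideanSpace ℝ (Fin 2))) (hU : IsOpen U)
    (hUsub : {x : EuclideanSpace ℝ (Fin 2) | R₁ ≤ ‖x‖ ∧ ‖x‖ ≤ R₂} ⊆ U)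
    (hu : ContDiffOn ℝ (⊤ : ℕ∞) u U)
    (g : ℝ → ℝ)
    (hg : ∀ r, g r = (1 / (2 * Real.pi)) * ∫ θ in (0:ℝ)..(2 * Real.pi),
      u ((WithLp.equiv 2 (Fin 2 → ℝ)).symm ![r * Real.cos θ, r * Real.sin θ])) :
    (∀ r ∈ Set.Ioo R₁ R₂, DifferentiableAt ℝ g r) ∧
    2 * Real.pi * ∫ r in R₁..R₂, r * (deriv g r) ^ 2 ≤
      ∫ x in {x : EuclideanSpace ℝ (Fin 2) | R₁ < ‖x‖ ∧ ‖x‖ < R₂}, ‖gradient u x‖ ^ 2 := by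
  have pi_pos := Real.pi_pos
  have h2pi : (0:ℝ) < 2 * π := by linarith
  -- rewrite g
  have hg' : g = fun r => (1 / (2 * π)) * ∫ θ in (0:ℝ)..(2 * π), u (r • vdir θ) := by
    funext r
    rw [hg r]
    congr 1
    exact intervalIntegral.integral_congr fun θ _ => by rw [cpt_eq]
  -- gradient norm
  have hgrad_norm : ∀ x, ‖gradient u x‖ = ‖fderiv ℝ u x‖ := by
    intro x
    unfold gradient
    exact LinearIsometryEquiv.norm_map _ _
  set G : EuclideanSpace ℝ (Fin 2) → ℝ := fun x => ‖fderiv ℝ u x‖ ^ 2 with hGdef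
  set K := {x : EuclideanSpace ℝ (Fin 2) | R₁ ≤ ‖x‖ ∧ ‖x‖ ≤ R₂} with hKdef
  have hKU : K ⊆ U := hUsub
  have hfd : ContinuousOn (fderiv ℝ u) U := hu.continuousOn_fderiv_of_isOpen hU (by simp)
  have hGcont : ContinuousOn G U := (hfd.norm).pow 2
  have hmemK : ∀ {s : ℝ}, s ∈ Icc R₁ R₂ → ∀ θ, s • vdir θ ∈ K := fun {s} hs θ =>
    smul_vdir_mem_K θ ((hR₁.le.trans hs.1)) hs.1 hs.2
  set D : ℝ → ℝ → ℝ := fun r θ => fderiv ℝ u (r • vdir θ) (vdir θ) with hDdef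
  -- derivative of g
  have hhd : ∀ r ∈ Ioo R₁ R₂, HasDerivAt g ((1 / (2 * π)) * ∫ θ in (0:ℝ)..(2 * π), D r θ) r := by
    intro r hr
    rw [hg']
    exact ((key_deriv hR₁ hU hUsub hu hr).2).const_mul (1 / (2 * π))
  have hdiff : ∀ r ∈ Ioo R₁ R₂, DifferentiableAt ℝ g r := fun r hr =>
    (hhd r hr).differentiableAt
  refine ⟨hdiff, ?_⟩
  have hderiv : ∀ r ∈ Ioo R₁ R₂,
      deriv g r = (1 / (2 * π)) * ∫ θ in (0:ℝ)..(2 * π), D r θ := fun r hr =>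
    (hhd r hr).deriv
  -- continuity of D r and G on circles
  have hcontD : ∀ r ∈ Icc R₁ R₂, Continuous (D r) := by
    intro r hr
    refine Continuous.clm_apply ?_ cont_vdir
    exact hfd.comp_continuous ((continuous_const (y := r)).smul cont_vdir) (fun θ => hKU (hmemK hr θ))
  have hcontG : ∀ r ∈ Icc R₁ R₂, Continuous (fun θ => G (r • vdir θ)) := by
    intro r hr
    exact hGcont.comp_continuous ((continuous_const (y := r)).smul cont_vdir) (fun θ => hKU (hmemK hr θ))
  -- bound on fderiv over K
  obtain ⟨M, hM⟩ := compact_K.exists_bound_of_continuousOn (hfd.mono hKU)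
  have hMnonneg : 0 ≤ M := le_trans (norm_nonneg _) (hM _ (hmemK ⟨le_refl R₁, hR.le⟩ 0))
  -- |deriv g r| ≤ M on Ioo
  have hderiv_bound : ∀ r ∈ Ioo R₁ R₂, |deriv g r| ≤ M := by
    intro r hr
    rw [hderiv r hr]
    have hDb : ∀ θ ∈ Set.uIoc (0:ℝ) (2 * π), ‖D r θ‖ ≤ M := by
      intro θ _
      calc ‖D r θ‖ ≤ ‖fderiv ℝ u (r • vdir θ)‖ * ‖vdir θ‖ := ContinuousLinearMap.le_opNorm _ _
        _ = ‖fderiv ℝ u (r • vdir θ)‖ := by rw [norm_vdir, mul_one]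
        _ ≤ M := hM _ (hmemK (Ioo_subset_Icc_self hr) θ)
    have := intervalIntegral.norm_integral_le_of_norm_le_const (C := M) (f := D r)
      (a := 0) (b := 2 * π) hDb
    rw [abs_mul, abs_of_pos (by positivity : (0:ℝ) < 1 / (2 * π))]
    have h1 : |∫ θ in (0:ℝ)..(2 * π), D r θ| ≤ M * (2 * π) := by
      simpa [abs_of_pos h2pi] using this
    calc 1 / (2 * π) * |∫ θ in (0:ℝ)..(2 * π), D r θ| ≤ 1 / (2 * π) * (M * (2 * π)) := by
          apply mul_le_mul_of_nonneg_left h1 (by positivity)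
      _ = M := by field_simp
  -- pointwise inequality
  have hpoint : ∀ r ∈ Ioo R₁ R₂,
      2 * π * (r * (deriv g r) ^ 2) ≤ r * ∫ θ in (0:ℝ)..(2 * π), G (r • vdir θ) := by
    intro r hr
    have hrIcc := Ioo_subset_Icc_self hr
    have hDint : IntervalIntegrable (D r) volume 0 (2 * π) := (key_deriv hR₁ hU hUsub hu hr).1
    have hD2int : IntervalIntegrable (fun θ => D r θ ^ 2) volume 0 (2 * π) :=
      ((hcontD r hrIcc).pow 2).intervalIntegrable _ _
    have hGint : IntervalIntegrable (fun θ => G (r • vdir θ)) volume 0 (2 * π) :=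
      (hcontG r hrIcc).intervalIntegrable _ _
    have hcs : (∫ θ in (0:ℝ)..(2 * π), D r θ) ^ 2
        ≤ (2 * π) * ∫ θ in (0:ℝ)..(2 * π), D r θ ^ 2 := cs_aux h2pi hDint hD2int
    have hD2G : ∀ θ ∈ Icc (0:ℝ) (2 * π), D r θ ^ 2 ≤ G (r • vdir θ) := by
      intro θ _
      have h1 : |D r θ| ≤ ‖fderiv ℝ u (r • vdir θ)‖ := by
        calc |D r θ| = ‖D r θ‖ := (Real.norm_eq_abs _).symm
          _ ≤ ‖fderiv ℝ u (r • vdir θ)‖ * ‖vdir θ‖ := ContinuousLinearMap.le_opNorm _ _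
          _ = ‖fderiv ℝ u (r • vdir θ)‖ := by rw [norm_vdir, mul_one]
      calc D r θ ^ 2 = |D r θ| ^ 2 := (sq_abs _).symm
        _ ≤ ‖fderiv ℝ u (r • vdir θ)‖ ^ 2 := by
            exact pow_le_pow_left₀ (abs_nonneg _) h1 2
        _ = G (r • vdir θ) := rfl
    have hmono : (∫ θ in (0:ℝ)..(2 * π), D r θ ^ 2)
        ≤ ∫ θ in (0:ℝ)..(2 * π), G (r • vdir θ) :=
      intervalIntegral.integral_mono_on h2pi.le hD2int hGint hD2G
    have hrpos : 0 < r := hR₁.trans hr.1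
    rw [hderiv r hr]
    have key : 2 * π * ((1 / (2 * π)) * ∫ θ in (0:ℝ)..(2 * π), D r θ) ^ 2
        ≤ ∫ θ in (0:ℝ)..(2 * π), D r θ ^ 2 := by
      have h1 : 2 * π * ((1 / (2 * π)) * ∫ θ in (0:ℝ)..(2 * π), D r θ) ^ 2
          = (∫ θ in (0:ℝ)..(2 * π), D r θ) ^ 2 / (2 * π) := by
        field_simp
      rw [h1, div_le_iff₀ h2pi]
      calc (∫ θ in (0:ℝ)..(2 * π), D r θ) ^ 2
          ≤ (2 * π) * ∫ θ in (0:ℝ)..(2 * π), D r θ ^ 2 := hcs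
        _ = (∫ θ in (0:ℝ)..(2 * π), D r θ ^ 2) * (2 * π) := by ring
    calc 2 * π * (r * ((1 / (2 * π)) * ∫ θ in (0:ℝ)..(2 * π), D r θ) ^ 2)
        = r * (2 * π * ((1 / (2 * π)) * ∫ θ in (0:ℝ)..(2 * π), D r θ) ^ 2) := by ring
      _ ≤ r * ∫ θ in (0:ℝ)..(2 * π), D r θ ^ 2 := by
          exact mul_le_mul_of_nonneg_left key hrpos.le
      _ ≤ r * ∫ θ in (0:ℝ)..(2 * π), G (r • vdir θ) := by
          exact mul_le_mul_of_nonneg_left hmono hrpos.le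
  -- RHS via polar coordinates
  have hRHS1 : (∫ x in {x : EuclideanSpace ℝ (Fin 2) | R₁ < ‖x‖ ∧ ‖x‖ < R₂},
      ‖gradient u x‖ ^ 2) = ∫ x in {x : EuclideanSpace ℝ (Fin 2) | R₁ < ‖x‖ ∧ ‖x‖ < R₂}, G x := by
    simp only [hgrad_norm]; rfl
  set ψ : ℝ × ℝ → ℝ := fun p => p.1 * G (p.1 • vdir p.2) with hψdef
  have hψeq : ∀ p : ℝ × ℝ,
      p.1 * G ((WithLp.equiv 2 (Fin 2 → ℝ)).symm ![p.1 * Real.cos p.2, p.1 * Real.sin p.2])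
        = ψ p := by
    intro p
    rw [cpt_eq]
  have hRHS2 : (∫ x in {x : EuclideanSpace ℝ (Fin 2) | R₁ < ‖x‖ ∧ ‖x‖ < R₂}, G x)
      = ∫ p in Ioo R₁ R₂ ×ˢ Ioo (-π) π, ψ p := by
    rw [polar_setIntegral R₁ R₂ hR₁ G]
    exact setIntegral_congr_fun ((measurableSet_Ioo).prod measurableSet_Ioo)
      (fun p _ => hψeq p)
  -- integrability of ψ
  have hψcont : ContinuousOn ψ (Icc R₁ R₂ ×ˢ Icc (-π) π) := by
    have hc : Continuous fun p : ℝ × ℝ => p.1 • vdir p.2 :=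
      continuous_fst.smul (cont_vdir.comp continuous_snd)
    refine ContinuousOn.mul continuous_fst.continuousOn ?_
    refine hGcont.comp hc.continuousOn ?_
    rintro ⟨r, θ⟩ ⟨hr, -⟩
    exact hKU (hmemK hr θ)
  have hψint : IntegrableOn ψ (Ioo R₁ R₂ ×ˢ Ioo (-π) π) := by
    refine (hψcont.integrableOn_compact (isCompact_Icc.prod isCompact_Icc)).mono_set ?_
    exact Set.prod_mono Ioo_subset_Icc_self Ioo_subset_Icc_self
  -- Fubini
  have hFub : (∫ p in Ioo R₁ R₂ ×ˢ Ioo (-π) π, ψ p)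
      = ∫ r in Ioo R₁ R₂, ∫ θ in Ioo (-π) π, ψ (r, θ) := by
    rw [MeasureTheory.Measure.volume_eq_prod] at hψint ⊢
    exact setIntegral_prod ψ hψint
  set Q : ℝ → ℝ := fun r => ∫ θ in Ioo (-π) π, ψ (r, θ) with hQdef
  have hQint : IntegrableOn Q (Ioo R₁ R₂) := by
    have h1 : Integrable ψ (((volume : Measure ℝ).restrict (Ioo R₁ R₂)).prod
        ((volume : Measure ℝ).restrict (Ioo (-π) π))) := by
      rw [Measure.prod_restrict]
      rw [MeasureTheory.Measure.volume_eq_prod] at hψint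
      exact hψint
    exact h1.integral_prod_left
  -- Q r equals r * circle integral
  have hQeq : ∀ r ∈ Ioo R₁ R₂, Q r = r * ∫ θ in (0:ℝ)..(2 * π), G (r • vdir θ) := by
    intro r hr
    have hper : Function.Periodic (fun θ => G (r • vdir θ)) (2 * π) := by
      intro θ
      simp only [vdir_per]
    have hshift := hper.intervalIntegral_add_eq (-π) 0
    have hπ1 : -π + 2 * π = π := by ring
    have hπ2 : (0:ℝ) + 2 * π = 2 * π := by ring
    rw [hπ1, hπ2] at hshift
    have h1 : Q r = ∫ θ in (-π)..π, ψ (r, θ) := by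
      rw [hQdef]
      rw [intervalIntegral.integral_of_le (by linarith : -π ≤ π)]
      rw [integral_Ioc_eq_integral_Ioo]
    rw [h1]
    have h2 : ∀ θ, ψ (r, θ) = r * G (r • vdir θ) := fun θ => rfl
    calc (∫ θ in (-π)..π, ψ (r, θ)) = ∫ θ in (-π)..π, r * G (r • vdir θ) := by
          exact intervalIntegral.integral_congr fun θ _ => h2 θ
      _ = r * ∫ θ in (-π)..π, G (r • vdir θ) := intervalIntegral.integral_const_mul _ _
      _ = r * ∫ θ in (0:ℝ)..(2 * π), G (r • vdir θ) := by rw [hshift]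
  -- LHS as set integral over Ioo
  set f₁ : ℝ → ℝ := fun r => 2 * π * (r * (deriv g r) ^ 2) with hf₁def
  have hLHS : 2 * π * ∫ r in R₁..R₂, r * (deriv g r) ^ 2 = ∫ r in Ioo R₁ R₂, f₁ r := by
    rw [intervalIntegral.integral_of_le hR.le, integral_Ioc_eq_integral_Ioo]
    rw [← MeasureTheory.integral_const_mul]
  -- integrability of f₁
  have hf₁meas : Measurable f₁ := by
    exact (measurable_const.mul (measurable_id.mul ((measurable_deriv g).pow_const 2)))
  have hf₁int : IntegrableOn f₁ (Ioo R₁ R₂) := by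
    have hC : IntegrableOn (fun _ : ℝ => 2 * π * (R₂ * M ^ 2)) (Ioo R₁ R₂) := by
      exact integrableOn_const measure_Ioo_lt_top.ne
    refine hC.integrable.mono' hf₁meas.aestronglyMeasurable ?_
    rw [ae_restrict_iff' measurableSet_Ioo]
    refine Filter.Eventually.of_forall fun r hr => ?_
    have hrb : 0 < r := hR₁.trans hr.1
    have hd := hderiv_bound r hr
    have h1 : ‖f₁ r‖ = 2 * π * (r * (deriv g r) ^ 2) := by
      rw [Real.norm_eq_abs, abs_of_nonneg (by positivity)]
    rw [h1]
    have h2 : (deriv g r) ^ 2 ≤ M ^ 2 := by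
      rw [← sq_abs]
      exact pow_le_pow_left₀ (abs_nonneg _) hd 2
    have h3 : r * deriv g r ^ 2 ≤ R₂ * M ^ 2 :=
      mul_le_mul hr.2.le h2 (sq_nonneg _) (le_of_lt (hR₁.trans hR))
    exact mul_le_mul_of_nonneg_left h3 (by positivity)
  -- final comparison
  rw [hRHS1, hRHS2, hFub, hLHS]
  refine setIntegral_mono_on hf₁int hQint measurableSet_Ioo ?_
  intro r hr
  have hpt := hpoint r hr
  rw [← hQeq r hr] at hpt
  exact hpt
end

section
/- Let ε > 0 and α > 0, and define φ : ℝ² → ℝ by φ(x) = −2·ln(|x|² + ε). Then ∫_{B_{α·√ε}(0)} ‖∇φ(x)‖² dx = 16π·( ln(1 + α²) − α²/(1 + α²) ), where B_{α·√ε}(0) is the open Euclidean ball of radius α·√ε centered at the origin and ∇φ is the Euclidean gradient. In particular this quantity is independent of ε. -/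
open MeasureTheory Real Set Metric InnerProductSpace

/-!
The integrand is radial: `∇φ(x) = -4 x / (|x|² + ε)`, so `‖∇φ(x)‖² = 16 r² / (r² + ε)²` with
`r = |x|`. Polar coordinates turn the integral over the ball of radius `R` into
`2π ∫₀^R 16 r³ / (r² + ε)² dr`, and `8 (log (r² + ε) + ε / (r² + ε))` is an antiderivative of the
radial integrand. At `R² = α² ε` the factor `ε` cancels.
-/

section Gradient

variable {E : Type*} [NormedAddCommGroup E] [InnerProductSpace ℝ E] [CompleteSpace E] {ε : ℝ}

theorem hasGradientAt_neg_two_mul_log_norm_sq_add (hε : 0 < ε) (x : E) :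
    HasGradientAt (fun y : E => -2 * log (‖y‖ ^ 2 + ε)) ((-4 / (‖x‖ ^ 2 + ε)) • x) x := by
  have hpos : 0 < ‖x‖ ^ 2 + ε := by positivity
  have hnormSq : HasFDerivAt (fun y : E => ‖y‖ ^ 2 + ε) (2 • innerSL ℝ x) x := by
    simpa using (hasFDerivAt_id x).norm_sq.add_const ε
  rw [hasGradientAt_iff_hasFDerivAt]
  refine ((hnormSq.log hpos.ne').const_mul (-2 : ℝ)).congr_fderiv ?_
  ext y
  simp only [neg_smul, neg_apply, smul_apply, coe_innerSL_apply, nsmul_eq_mul, Nat.cast_ofNat,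
    smul_eq_mul, map_smul, toDual_apply_apply]
  ring

theorem norm_gradient_neg_two_mul_log_norm_sq_add_sq (hε : 0 < ε) (x : E) :
    ‖gradient (fun y : E => -2 * log (‖y‖ ^ 2 + ε)) x‖ ^ 2
      = 16 * ‖x‖ ^ 2 / (‖x‖ ^ 2 + ε) ^ 2 := by
  have hpos : 0 < ‖x‖ ^ 2 + ε := by positivity
  rw [(hasGradientAt_neg_two_mul_log_norm_sq_add hε x).gradient, norm_smul, norm_div,
    norm_neg, Real.norm_of_nonneg hpos.le, mul_pow, div_pow, Real.norm_ofNat]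
  ring

end Gradient

theorem setIntegral_ball_fun_norm_addHaar {E : Type*} [NormedAddCommGroup E] [NormedSpace ℝ E]
    [Nontrivial E] [MeasurableSpace E] [BorelSpace E] [FiniteDimensional ℝ E] (μ : Measure E)
    [μ.IsAddHaarMeasure] {F : Type*} [NormedAddCommGroup F] [NormedSpace ℝ F]
    (f : ℝ → F) (R : ℝ) :
    ∫ x in ball (0 : E) R, f ‖x‖ ∂μ
      = Module.finrank ℝ E • μ.real (ball 0 1) •
          ∫ r in Ioo 0 R, r ^ (Module.finrank ℝ E - 1) • f r := by
  have hball :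
      (ball (0 : E) R).indicator (fun x => f ‖x‖) = fun x => (Iio R).indicator f ‖x‖ := by
    ext x
    by_cases hx : ‖x‖ < R <;> simp [indicator, hx]
  have hradial : (Ioi (0 : ℝ)).indicator
        (fun r => r ^ (Module.finrank ℝ E - 1) • (Iio R).indicator f r)
      = (Ioo 0 R).indicator fun r => r ^ (Module.finrank ℝ E - 1) • f r := by
    ext r
    by_cases h0 : 0 < r <;> by_cases hR : r < R <;> simp [indicator, h0, hR]
  rw [← integral_indicator measurableSet_ball, hball, integral_fun_norm_addHaar,
    ← integral_indicator measurableSet_Ioi, hradial, integral_indicator measurableSet_Ioo]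

theorem setIntegral_ball_fun_norm_fin_two (f : ℝ → ℝ) {R : ℝ} (hR : 0 ≤ R) :
    ∫ x in ball (0 : EuclideanSpace ℝ (Fin 2)) R, f ‖x‖ = 2 * π * ∫ r in 0..R, r * f r := by
  rw [setIntegral_ball_fun_norm_addHaar, finrank_euclideanSpace_fin, measureReal_def,
    EuclideanSpace.volume_ball_fin_two, intervalIntegral.integral_of_le hR,
    integral_Ioc_eq_integral_Ioo]
  simp [ENNReal.toReal_ofReal pi_pos.le, mul_assoc]

theorem integral_mul_sixteen_mul_sq_div_sq_add_sq {ε : ℝ} (hε : 0 < ε) (R : ℝ) :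
    ∫ r in 0..R, r * (16 * r ^ 2 / (r ^ 2 + ε) ^ 2)
      = 8 * (log ((R ^ 2 + ε) / ε) - R ^ 2 / (R ^ 2 + ε)) := by
  have hpos : ∀ r : ℝ, 0 < r ^ 2 + ε := fun r => by positivity
  have hderiv : ∀ r ∈ uIcc 0 R, HasDerivAt (fun r => 8 * (log (r ^ 2 + ε) + ε / (r ^ 2 + ε)))
      (r * (16 * r ^ 2 / (r ^ 2 + ε) ^ 2)) r := by
    intro r _
    have hsq : HasDerivAt (fun r : ℝ => r ^ 2 + ε) (2 * r) r := by
      simpa using (hasDerivAt_pow 2 r).add_const ε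
    refine (((hsq.log (hpos r).ne').add ((hasDerivAt_const r ε).div hsq (hpos r).ne')).const_mul
      8).congr_deriv ?_
    field_simp
    ring
  have hcont : Continuous fun r : ℝ => r * (16 * r ^ 2 / (r ^ 2 + ε) ^ 2) :=
    continuous_id.mul ((by fun_prop : Continuous fun r : ℝ => 16 * r ^ 2).div (by fun_prop)
      fun r => (pow_pos (hpos r) 2).ne')
  rw [intervalIntegral.integral_eq_sub_of_hasDerivAt hderiv (hcont.intervalIntegrable 0 R),
    log_div (hpos R).ne' hε.ne', zero_pow two_ne_zero, zero_add]
  field_simp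
  ring

theorem stmt_12 (ε α : ℝ) (hε : 0 < ε) (hα : 0 < α)
    (φ : EuclideanSpace ℝ (Fin 2) → ℝ)
    (hφ : ∀ x, φ x = -2 * Real.log (‖x‖ ^ 2 + ε)) :
    ∫ x in Metric.ball (0 : EuclideanSpace ℝ (Fin 2)) (α * Real.sqrt ε),
        ‖gradient φ x‖ ^ 2 =
      16 * Real.pi * (Real.log (1 + α ^ 2) - α ^ 2 / (1 + α ^ 2)) := by
  obtain rfl : φ = fun x => -2 * log (‖x‖ ^ 2 + ε) := funext hφ
  have hR : 0 ≤ α * √ε := by positivity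
  have hR2 : (α * √ε) ^ 2 = α ^ 2 * ε := by rw [mul_pow, sq_sqrt hε.le]
  simp only [norm_gradient_neg_two_mul_log_norm_sq_add_sq hε]
  rw [setIntegral_ball_fun_norm_fin_two (fun r => 16 * r ^ 2 / (r ^ 2 + ε) ^ 2) hR,
    integral_mul_sixteen_mul_sq_div_sq_add_sq hε, hR2,
    show (α ^ 2 * ε + ε) / ε = 1 + α ^ 2 by field_simp; ring,
    show α ^ 2 * ε / (α ^ 2 * ε + ε) = α ^ 2 / (1 + α ^ 2) by field_simp; ring]
  ring
end
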